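/- Let s : ℝ → [0,∞) be convex and lower semicontinuous with s(0) = 0, and let κ, α > 0. Suppose there exist b, c > 0 such that for every x ∈ ℝ with the property that |x| ≤ z for every z ∈ ℝ satisfying prox_{αs}(z) = cκ, one has |prox_{αs}(x)| ≤ (κ²/(κ² + αb))·|x|. Then for all y ∈ ℝ: if |y| ≤ cκ then s(y) ≥ (b/2)·(y/κ)², and if |y| > cκ then s(y) ≥ bc·|y/κ| − bc²/2. -/
import Mathlib


noncomputable section

/-- `p` is the (unique) proximal point at `x` of the real-valued functional `g`, i.e.
`p = prox_g(x)` is the unique minimizer of `y ↦ (x-y)²/2 + g(y)`. -/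
def IsProxPtR (g : ℝ → ℝ) (x p : ℝ) : Prop :=
  (∀ y : ℝ, (x - p) ^ 2 / 2 + g p ≤ (x - y) ^ 2 / 2 + g y) ∧
  ∀ q : ℝ, (∀ y : ℝ, (x - q) ^ 2 / 2 + g q ≤ (x - y) ^ 2 / 2 + g y) → q = p

lemma prox_subgrad (s : ℝ → ℝ) (hconv : ConvexOn ℝ Set.univ s) (α : ℝ) (hα : 0 < α)
    (p : ℝ → ℝ) (hp : ∀ x, IsProxPtR (fun y => α * s y) x (p x)) (x y : ℝ) :
    (x - p x) * (y - p x) ≤ α * (s y - s (p x)) := by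
  set q := p x with hq
  have key : ∀ θ : ℝ, 0 < θ → θ ≤ 1 →
      (x - q) * (y - q) ≤ θ * ((y - q)^2/2) + α * (s y - s q) := by
    intro θ hθ0 hθ1
    have h1 : (x - q)^2/2 + α * s q ≤ (x - ((1-θ)*q + θ*y))^2/2 + α * s ((1-θ)*q + θ*y) :=
      (hp x).1 ((1 - θ) * q + θ * y)
    have h2 := hconv.2 (Set.mem_univ q) (Set.mem_univ y)
      (show (0:ℝ) ≤ 1 - θ by linarith) hθ0.le (show (1-θ)+θ = (1:ℝ) by ring)
    simp only [smul_eq_mul] at h2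
    have h3 : α * s ((1 - θ) * q + θ * y) ≤ α * ((1 - θ) * s q + θ * s y) :=
      mul_le_mul_of_nonneg_left h2 hα.le
    have h4 : θ * ((x - q) * (y - q)) ≤ θ * (θ * ((y-q)^2/2) + α * (s y - s q)) := by
      nlinarith [h1, h3]
    exact le_of_mul_le_mul_left h4 hθ0
  by_contra hcon
  push_neg at hcon
  set A := (x - q) * (y - q)
  set Cc := α * (s y - s q)
  set B := (y - q)^2/2 with hB
  have hB0 : (0:ℝ) ≤ B := by positivity
  have hδ : 0 < A - Cc := by linarith
  set θ := min 1 ((A - Cc)/(B+1)) with hθ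
  have hθ0 : 0 < θ := lt_min one_pos (div_pos hδ (by linarith))
  have hθ1 : θ ≤ 1 := min_le_left _ _
  have h5 := key θ hθ0 hθ1
  have h6 : θ * B ≤ (A - Cc)/(B+1) * B :=
    mul_le_mul_of_nonneg_right (min_le_right _ _) hB0
  have h7 : (A - Cc)/(B+1) * B < A - Cc := by
    rw [div_mul_eq_mul_div, div_lt_iff₀ (by linarith)]
    nlinarith
  linarith

lemma gronwall_aux (f : ℝ → ℝ) (C Y : ℝ) (hC : 0 ≤ C) (hY : 0 ≤ Y) (hf0 : f 0 = 0)
    (key : ∀ u, 0 ≤ u → u ≤ Y → ∀ y, u ≤ y → y ≤ Y → f u + 2*C*u*(y - u) ≤ f y) :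
    C * Y^2 ≤ f Y := by
  have main : ∀ n : ℕ, 0 < n → C*Y^2 - C*Y^2/n ≤ f Y := by
    intro n hn
    have hn0 : (0:ℝ) < n := by exact_mod_cast hn
    set h := Y / n with hh
    have hh0 : 0 ≤ h := div_nonneg hY hn0.le
    have hne : (n:ℝ) ≠ 0 := ne_of_gt hn0
    have hnh : (n:ℝ) * h = Y := by rw [hh]; field_simp
    have claim : ∀ k : ℕ, k ≤ n → C*((k:ℝ)*h)^2 - (k:ℝ)*(C*h^2) ≤ f ((k:ℝ)*h) := by
      intro k
      induction k with
      | zero => intro _; simp [hf0]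
      | succ k ih =>
        intro hk1
        have hk : k ≤ n := Nat.le_of_succ_le hk1
        have h1 := ih hk
        have hkn : (k:ℝ) ≤ n := by exact_mod_cast hk
        have hk1n : (k:ℝ) + 1 ≤ n := by exact_mod_cast hk1
        have hu0 : 0 ≤ (k:ℝ)*h := by positivity
        have huY : (k:ℝ)*h ≤ Y := by
          calc (k:ℝ)*h ≤ (n:ℝ)*h := mul_le_mul_of_nonneg_right hkn hh0
            _ = Y := hnh
        have hyY : ((k:ℝ)+1)*h ≤ Y := by
          calc ((k:ℝ)+1)*h ≤ (n:ℝ)*h := mul_le_mul_of_nonneg_right hk1n hh0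
            _ = Y := hnh
        have h2 := key ((k:ℝ)*h) hu0 huY (((k:ℝ)+1)*h) (by nlinarith) hyY
        push_cast
        nlinarith [h1, h2]
    have hcl := claim n le_rfl
    rw [hnh] at hcl
    have e2 : (n:ℝ)*(C*h^2) = C*Y^2/(n:ℝ) := by
      rw [hh]; field_simp
    linarith [hcl, e2.le, e2.ge]
  by_contra hcon
  push_neg at hcon
  have hε : 0 < C*Y^2 - f Y := by linarith
  obtain ⟨n, hn⟩ := exists_nat_gt (C*Y^2/(C*Y^2 - f Y))
  have hnn : (0:ℝ) ≤ C*Y^2/(C*Y^2 - f Y) := div_nonneg (by positivity) hε.le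
  have hn0' : (0:ℝ) < n := lt_of_le_of_lt hnn hn
  have hn0 : 0 < n := by exact_mod_cast hn0'
  have hlt : C*Y^2/(n:ℝ) < C*Y^2 - f Y := by
    rw [div_lt_iff₀ hn0']
    rw [div_lt_iff₀ hε] at hn
    linarith
  linarith [main n hn0]


set_option maxHeartbeats 1000000 in
/-- Lower bounds on a convex lsc `s : ℝ → [0,∞)` with `s 0 = 0` derived from
a contraction property of `prox_{α·s}` below the minimum of the preimage of `cκ`. -/
theorem statement1 (s : ℝ → ℝ) (hsnn : ∀ x, 0 ≤ s x)
    (hconv : ConvexOn ℝ Set.univ s) (hlsc : LowerSemicontinuous s) (hs0 : s 0 = 0)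
    (κ α : ℝ) (hκ : 0 < κ) (hα : 0 < α)
    (p : ℝ → ℝ) (hp : ∀ x, IsProxPtR (fun y => α * s y) x (p x))
    (b c : ℝ) (hb : 0 < b) (hc : 0 < c)
    (hyp : ∀ x : ℝ, (∀ z : ℝ, p z = c * κ → |x| ≤ z) →
      |p x| ≤ κ ^ 2 / (κ ^ 2 + α * b) * |x|) :
    ∀ y : ℝ, (|y| ≤ c * κ → b / 2 * (y / κ) ^ 2 ≤ s y) ∧
      (c * κ < |y| → b * c * |y / κ| - b * c ^ 2 / 2 ≤ s y) := by
  have hκ2 : (0:ℝ) < κ ^ 2 := by positivity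
  have hden : (0:ℝ) < κ ^ 2 + α * b := by positivity
  have hcκ : 0 < c * κ := mul_pos hc hκ
  have L1 : ∀ x y, (x - p x) * (y - p x) ≤ α * (s y - s (p x)) :=
    prox_subgrad s hconv α hα p hp
  have L2 : p 0 = 0 := by
    refine ((hp 0).2 0 ?_).symm
    intro y
    simp only [hs0, mul_zero]
    nlinarith [hsnn y, sq_nonneg y, mul_nonneg hα.le (hsnn y), sq_nonneg (0 - y)]
  have mono : ∀ a a', a ≤ a' → p a ≤ p a' := by
    intro a a' haa
    have h1 := L1 a (p a')
    have h2 := L1 a' (p a)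
    nlinarith [sq_nonneg (p a' - p a)]
  have lip : ∀ a a', |p a - p a'| ≤ |a - a'| := by
    intro a a'
    have h1 := L1 a (p a')
    have h2 := L1 a' (p a)
    have key : (p a - p a')^2 ≤ (a - a') * (p a - p a') := by nlinarith
    rcases le_total (p a - p a') 0 with h | h
    · rw [abs_of_nonpos h]
      nlinarith [neg_abs_le (a - a'), abs_nonneg (a - a')]
    · rw [abs_of_nonneg h]
      nlinarith [le_abs_self (a - a'), abs_nonneg (a - a')]
  have contp : Continuous p := by
    have : LipschitzWith 1 p := by
      apply LipschitzWith.of_dist_le_mul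
      intro a a'
      simpa [Real.dist_eq] using lip a a'
    exact this.continuous
  -- existence of a point where p reaches c*κ
  have hexist : ∃ X, 0 ≤ X ∧ c * κ ≤ p X := by
    obtain ⟨S, hS⟩ : ∃ S, S = α * s (2 * (c * κ)) := ⟨_, rfl⟩
    have hS0 : 0 ≤ S := by rw [hS]; exact mul_nonneg hα.le (hsnn _)
    have hSd : 0 ≤ S / (c * κ) := by positivity
    obtain ⟨X, hX⟩ : ∃ X, X = c * κ + S / (c * κ) + 1 := ⟨_, rfl⟩
    have hX0 : 0 ≤ X := by rw [hX]; positivity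
    refine ⟨X, hX0, ?_⟩
    by_contra hpx
    push_neg at hpx
    have hp0 : 0 ≤ p X := by rw [← L2]; exact mono 0 X hX0
    have h1 := L1 X (2 * (c * κ))
    have hA : S / (c*κ) + 1 ≤ X - p X := by linarith [hX.le, hX.ge]
    have hB : c*κ ≤ 2*(c*κ) - p X := by linarith
    have hAB : (S/(c*κ) + 1) * (c*κ) ≤ (X - p X) * (2*(c*κ) - p X) :=
      mul_le_mul hA hB hcκ.le (by linarith)
    have hexp : (S/(c*κ) + 1) * (c*κ) = S + c*κ := by field_simp
    have h1' : (X - p X) * (2*(c*κ) - p X) ≤ S := by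
      rw [hS]
      nlinarith [mul_nonneg hα.le (hsnn (p X)), h1]
    linarith
  obtain ⟨X, hX0, hXcκ⟩ := hexist
  obtain ⟨m, hmZ, hmmin⟩ : ∃ m, p m = c * κ ∧ ∀ z, p z = c * κ → m ≤ z := by
    have hZne : Set.Nonempty {z : ℝ | p z = c * κ} := by
      have hsub := intermediate_value_Icc hX0 contp.continuousOn
      have hmem : c * κ ∈ Set.Icc (p 0) (p X) := ⟨by rw [L2]; exact hcκ.le, hXcκ⟩
      obtain ⟨z, _, hz⟩ := hsub hmem
      exact ⟨z, hz⟩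
    have hZbdd : BddBelow {z : ℝ | p z = c * κ} := by
      refine ⟨0, fun z hz => ?_⟩
      by_contra hlt
      push_neg at hlt
      have := mono z 0 hlt.le
      rw [L2] at this
      rw [Set.mem_setOf_eq] at hz
      nlinarith
    have hcl : IsClosed {z : ℝ | p z = c * κ} := by
      have : {z : ℝ | p z = c * κ} = p ⁻¹' {c*κ} := by ext z; simp
      rw [this]
      exact isClosed_singleton.preimage contp
    exact ⟨sInf _, hcl.csInf_mem hZne hZbdd, fun z hz => csInf_le hZbdd hz⟩
  have hm0 : 0 < m := by
    by_contra hm'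
    push_neg at hm'
    have h := mono m 0 hm'
    rw [L2, hmZ] at h
    nlinarith
  have contract : ∀ x, |x| ≤ m → |p x| ≤ κ^2/(κ^2 + α*b) * |x| := by
    intro x hx
    exact hyp x (fun z hz => hx.trans (hmmin z hz))
  have hmlb : c * κ * (κ^2 + α*b) ≤ κ^2 * m := by
    have h := contract m (by rw [abs_of_pos hm0])
    rw [hmZ, abs_of_pos hm0, abs_of_pos hcκ, div_mul_eq_mul_div, le_div_iff₀ hden] at h
    linarith
  -- K+ : subgradient lower bound on [0, cκ]
  have Kpos : ∀ u, 0 ≤ u → u ≤ c * κ →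
      ∃ t, b / κ^2 * u ≤ t ∧ ∀ y, t * (y - u) ≤ s y - s u := by
    intro u hu0 hucκ
    obtain ⟨x, hxI, hpx⟩ : ∃ x ∈ Set.Icc 0 m, p x = u := by
      have hsub := intermediate_value_Icc hm0.le contp.continuousOn
      exact hsub ⟨by rw [L2]; exact hu0, by rw [hmZ]; exact hucκ⟩
    obtain ⟨hx0, hxm⟩ := hxI
    have hcx := contract x (by rwa [abs_of_nonneg hx0])
    rw [hpx, abs_of_nonneg hu0, abs_of_nonneg hx0, div_mul_eq_mul_div,
      le_div_iff₀ hden] at hcx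
    refine ⟨(x - u)/α, ?_, ?_⟩
    · rw [div_mul_eq_mul_div, div_le_div_iff₀ hκ2 hα]
      nlinarith
    · intro y
      have h1 := L1 x y
      rw [hpx] at h1
      rw [div_mul_eq_mul_div, div_le_iff₀ hα]
      nlinarith
  -- negative side
  obtain ⟨P, hP⟩ : ∃ P, P = p (-m) := ⟨_, rfl⟩
  have hP0 : P ≤ 0 := by rw [hP, ← L2]; exact mono (-m) 0 (by linarith)
  have hPlb : (-P) * (κ^2 + α*b) ≤ κ^2 * m := by
    have hcx := contract (-m) (by rw [abs_neg, abs_of_pos hm0])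
    rw [← hP, abs_of_nonpos hP0, abs_neg, abs_of_pos hm0, div_mul_eq_mul_div,
      le_div_iff₀ hden] at hcx
    linarith
  have Kneg : ∀ u, P ≤ u → u ≤ 0 →
      ∃ t, t ≤ b / κ^2 * u ∧ ∀ y, t * (y - u) ≤ s y - s u := by
    intro u hPu hu0
    obtain ⟨x, hxI, hpx⟩ : ∃ x ∈ Set.Icc (-m) 0, p x = u := by
      have hsub := intermediate_value_Icc (show -m ≤ (0:ℝ) by linarith) contp.continuousOn
      exact hsub ⟨by rw [← hP]; exact hPu, by rw [L2]; exact hu0⟩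
    obtain ⟨hxm, hx0⟩ := hxI
    have hcx := contract x (by rw [abs_of_nonpos hx0]; linarith)
    rw [hpx, abs_of_nonpos hu0, abs_of_nonpos hx0, div_mul_eq_mul_div,
      le_div_iff₀ hden] at hcx
    refine ⟨(x - u)/α, ?_, ?_⟩
    · rw [div_mul_eq_mul_div, div_le_div_iff₀ hα hκ2]
      nlinarith
    · intro y
      have h1 := L1 x y
      rw [hpx] at h1
      rw [div_mul_eq_mul_div, div_le_iff₀ hα]
      nlinarith
  obtain ⟨Cq, hCq⟩ : ∃ Cq, Cq = b / (2*κ^2) := ⟨_, rfl⟩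
  have hC0 : 0 ≤ Cq := by rw [hCq]; positivity
  have h2C : 2*Cq = b / κ^2 := by rw [hCq]; ring
  have hgoal1 : ∀ v : ℝ, Cq * v^2 = b/2*(v/κ)^2 := by
    intro v; rw [hCq]; ring
  have R1 : ∀ y, 0 ≤ y → y ≤ c*κ → Cq * y^2 ≤ s y := by
    intro Y hY0 hYc
    refine gronwall_aux s Cq Y hC0 hY0 hs0 ?_
    intro u hu0 huY y huy hyY
    obtain ⟨t, ht1, ht2⟩ := Kpos u hu0 (huY.trans hYc)
    rw [← h2C] at ht1
    have h3 := mul_le_mul_of_nonneg_right ht1 (show (0:ℝ) ≤ y - u by linarith)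
    have h4 := ht2 y
    linarith [h3, h4]
  have R2 : ∀ y, P ≤ y → y ≤ 0 → Cq * y^2 ≤ s y := by
    intro Y hYP hY0
    have hkey : ∀ u, 0 ≤ u → u ≤ -Y → ∀ y, u ≤ y → y ≤ -Y →
        (fun v => s (-v)) u + 2*Cq*u*(y - u) ≤ (fun v => s (-v)) y := by
      intro u hu0 huY y huy hyY
      obtain ⟨t, ht1, ht2⟩ := Kneg (-u) (by linarith) (by linarith)
      rw [← h2C] at ht1
      have h3 : 2*Cq*(-u) * (u - y) ≤ t * (u - y) :=
        mul_le_mul_of_nonpos_right ht1 (by linarith)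
      have h4 := ht2 (-y)
      simp only
      linarith [h3, h4]
    have hfin := gronwall_aux (fun v => s (-v)) Cq (-Y) hC0 (by linarith)
      (by simpa using hs0) hkey
    simpa only [neg_neg, neg_sq] using hfin
  have hscκ : b*c^2/2 ≤ s (c*κ) := by
    have h2 := R1 (c*κ) hcκ.le le_rfl
    have hCval : Cq * (c*κ)^2 = b*c^2/2 := by rw [hCq]; field_simp
    linarith
  have R3 : ∀ y, c*κ < y → b*c/κ * y - b*c^2/2 ≤ s y := by
    intro y hy
    obtain ⟨t, ht1, ht2⟩ := Kpos (c*κ) hcκ.le le_rfl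
    have ht1' : b*c/κ ≤ t := by
      have he : b / κ^2 * (c*κ) = b*c/κ := by field_simp
      linarith [he.le, he.ge]
    have h3 : b*c/κ * (y - c*κ) ≤ t * (y - c*κ) :=
      mul_le_mul_of_nonneg_right ht1' (by linarith)
    have h4 := ht2 y
    have hq : b*c/κ*(c*κ) = b*c^2 := by field_simp
    linarith [h3, h4, hscκ, hq.le, hq.ge]
  have R4 : ∀ y, y ≤ P → b*c*(P - y) ≤ (s y - s P) * κ := by
    intro y hy
    have h1 := L1 (-m) y
    rw [← hP] at h1
    have e1 : α*b*m ≤ (m + P)*(κ^2+α*b) := by nlinarith [hPlb]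
    have e4 : c*κ*(α*b) ≤ κ^2*(m+P) := by
      have e2 : c*κ*(κ^2+α*b)*(α*b) ≤ κ^2*m*(α*b) :=
        mul_le_mul_of_nonneg_right hmlb (by positivity)
      have e3 : κ^2*(α*b*m) ≤ κ^2*((m+P)*(κ^2+α*b)) :=
        mul_le_mul_of_nonneg_left e1 (by positivity)
      have h5 : c*κ*(α*b)*(κ^2+α*b) ≤ κ^2*(m+P)*(κ^2+α*b) := by linarith [e2, e3]
      exact le_of_mul_le_mul_right h5 hden
    have hslope : α*(b*c) ≤ (m + P)*κ := by
      have h6 : α*(b*c)*κ ≤ (m+P)*κ*κ := by nlinarith [e4]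
      exact le_of_mul_le_mul_right h6 hκ
    have h7 : α*(b*c)*(P-y) ≤ (m+P)*κ*(P-y) :=
      mul_le_mul_of_nonneg_right hslope (by linarith)
    have h8 : (m+P)*(P-y)*κ ≤ α*(s y - s P)*κ := by
      have h1' : (m+P)*(P-y) ≤ α*(s y - s P) := by nlinarith [h1]
      exact mul_le_mul_of_nonneg_right h1' hκ.le
    have h9 : α*(b*c*(P-y)) ≤ α*((s y - s P)*κ) := by linarith [h7, h8]
    exact le_of_mul_le_mul_left h9 hα
  intro y
  constructor
  · intro hy
    rw [show b/2*(y/κ)^2 = Cq*y^2 from (hgoal1 y).symm]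
    rcases le_total 0 y with h0 | h0
    · exact R1 y h0 (by rwa [abs_of_nonneg h0] at hy)
    · rcases le_or_gt P y with hPy | hPy
      · exact R2 y hPy h0
      · have hycκ : -(c*κ) ≤ y := by
          rw [abs_of_nonpos h0] at hy; linarith
        have h13 := R4 y hPy.le
        have h2P := R2 P le_rfl hP0
        have hYq' : -c ≤ y/κ := by rw [le_div_iff₀ hκ]; linarith
        have hPq : y/κ ≤ P/κ := by
          rw [div_le_div_iff₀ hκ hκ]
          exact mul_le_mul_of_nonneg_right hPy.le hκ.le
        have hA : 0 ≤ P/κ - y/κ := by linarith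
        have hB : 0 ≤ P/κ + y/κ + 2*c := by linarith
        have hint := mul_nonneg (mul_nonneg hb.le hA) hB
        have hdiv : b*c*(P-y)/κ ≤ s y - s P := by rw [div_le_iff₀ hκ]; exact h13
        have e1 : b*c*(P-y)/κ = b*c*(P/κ) - b*c*(y/κ) := by ring
        linarith [hint, hdiv, h2P, (hgoal1 y).le, (hgoal1 y).ge,
          (hgoal1 P).le, (hgoal1 P).ge, e1.le, e1.ge]
  · intro hy
    rcases lt_or_ge 0 y with h0 | h0
    · have hy' : c*κ < y := by rwa [abs_of_pos h0] at hy
      rw [abs_of_pos (div_pos h0 hκ)]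
      have h3 := R3 y hy'
      have he : b*c*(y/κ) = b*c/κ*y := by ring
      linarith [he.le, he.ge]
    · have hy' : c*κ < -y := by rwa [abs_of_nonpos h0] at hy
      have hyk : y/κ ≤ 0 := div_nonpos_of_nonpos_of_nonneg h0 hκ.le
      rw [abs_of_nonpos hyk]
      rcases le_or_gt P y with hPy | hPy
      · have h2 := R2 y hPy h0
        have hsq : 0 ≤ b*((y/κ) + c)^2 := by positivity
        linarith [h2, hsq, (hgoal1 y).le, (hgoal1 y).ge]
      · have h13 := R4 y hPy.le
        have h2P := R2 P le_rfl hP0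
        have hdiv : b*c*(P-y)/κ ≤ s y - s P := by rw [div_le_iff₀ hκ]; exact h13
        have hsq : 0 ≤ b*((P/κ) + c)^2 := by positivity
        have e1 : b*c*(P-y)/κ = b*c*(P/κ) - b*c*(y/κ) := by ring
        linarith [hdiv, h2P, hsq, (hgoal1 P).le, (hgoal1 P).ge, e1.le, e1.ge]
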